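/- The image of the Pogorelov map Φ : H³ × H³ → ℝ³ × ℝ³ is exactly the set {(a,b) ∈ ℝ³ × ℝ³ | ‖a‖ + ‖b‖ < 2}, where ‖·‖ denotes the Euclidean norm on ℝ³. -/

import Mathlib

noncomputable section

/-- Minkowski inner product on ℝ⁴: ⟨x,y⟩ = −x₀y₀ + x₁y₁ + x₂y₂ + x₃y₃. -/
def mink (x y : Fin 4 → ℝ) : ℝ :=
  -(x 0 * y 0) + x 1 * y 1 + x 2 * y 2 + x 3 * y 3

/-- The hyperboloid model of hyperbolic 3-space. -/
def Hyp : Set (Fin 4 → ℝ) := {x | 0 < x 0 ∧ mink x x = -1}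

/-- Spatial part x⃗ of x = (x₀, x⃗). -/
def spat (x : Fin 4 → ℝ) : Fin 3 → ℝ := fun i => x i.succ

/-- The Pogorelov map Φ(x,y) = (2x⃗/(x₀+y₀), 2y⃗/(x₀+y₀)). -/
def pog (x y : Fin 4 → ℝ) : (Fin 3 → ℝ) × (Fin 3 → ℝ) :=
  ((2 / (x 0 + y 0)) • spat x, (2 / (x 0 + y 0)) • spat y)

/-- Euclidean norm on ℝ³. -/
def enorm3 (a : Fin 3 → ℝ) : ℝ := Real.sqrt (a 0 ^ 2 + a 1 ^ 2 + a 2 ^ 2)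

/-!
A point of `H³` satisfies `‖x⃗‖ < x₀`, so `‖Φ₁‖ + ‖Φ₂‖ = 2 (‖x⃗‖ + ‖y⃗‖) / (x₀ + y₀) < 2`.
Conversely, `Φ` extends to pairs of future timelike vectors and is invariant under scaling both
by the same factor. Hence for `‖a‖ + ‖b‖ < 2` it suffices to find `u > 0` with
`√(u² + ‖a‖²) + √(u² + ‖b‖²) = 2`: then `(√(u² + ‖a‖²), a)` and `(√(u² + ‖b‖²), b)` both have
Minkowski norm `-u²`, so their rescalings by `u⁻¹` lie on `H³`, and `Φ` maps them to `(a, b)`.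
-/

lemma enorm3_nonneg (a : Fin 3 → ℝ) : 0 ≤ enorm3 a := Real.sqrt_nonneg _

lemma enorm3_sq (a : Fin 3 → ℝ) : enorm3 a ^ 2 = a 0 ^ 2 + a 1 ^ 2 + a 2 ^ 2 :=
  Real.sq_sqrt (by positivity)

lemma enorm3_smul (c : ℝ) (a : Fin 3 → ℝ) : enorm3 (c • a) = |c| * enorm3 a := by
  rw [← Real.sqrt_sq_eq_abs, enorm3, enorm3, ← Real.sqrt_mul (sq_nonneg c)]
  simp only [Pi.smul_apply, smul_eq_mul]
  ring_nf

lemma mink_self (x : Fin 4 → ℝ) : mink x x = enorm3 (spat x) ^ 2 - x 0 ^ 2 := by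
  rw [enorm3_sq, mink]
  simp only [spat]
  ring_nf
  rfl

lemma mink_cons_self (s : ℝ) (v : Fin 3 → ℝ) :
    mink (Fin.cons s v) (Fin.cons s v) = enorm3 v ^ 2 - s ^ 2 :=
  mink_self _

lemma mink_smul_self (c : ℝ) (x : Fin 4 → ℝ) : mink (c • x) (c • x) = c ^ 2 * mink x x := by
  simp only [mink, Pi.smul_apply, smul_eq_mul]
  ring

lemma spat_smul (c : ℝ) (x : Fin 4 → ℝ) : spat (c • x) = c • spat x := rfl

lemma pog_smul {c : ℝ} (hc : c ≠ 0) (x y : Fin 4 → ℝ) : pog (c • x) (c • y) = pog x y := by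
  have h : 2 / (c * x 0 + c * y 0) * c = 2 / (x 0 + y 0) := by
    rw [← mul_add, div_mul_eq_mul_div, mul_comm 2 c, mul_div_mul_left _ _ hc]
  simp only [pog, spat_smul, smul_smul, Pi.smul_apply, smul_eq_mul, h]

lemma pog_cons (s s' : ℝ) (v w : Fin 3 → ℝ) :
    pog (Fin.cons s v) (Fin.cons s' w) = ((2 / (s + s')) • v, (2 / (s + s')) • w) := rfl

lemma enorm3_spat_lt_of_mem_Hyp {x : Fin 4 → ℝ} (hx : x ∈ Hyp) : enorm3 (spat x) < x 0 := by
  obtain ⟨hx0, hxx⟩ := hx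
  rw [mink_self] at hxx
  exact lt_of_pow_lt_pow_left₀ 2 hx0.le (by linarith)

lemma inv_smul_mem_Hyp {x : Fin 4 → ℝ} {u : ℝ} (hu : 0 < u) (hx0 : 0 < x 0)
    (hxx : mink x x = -u ^ 2) : u⁻¹ • x ∈ Hyp := by
  refine ⟨by simpa using mul_pos (inv_pos.2 hu) hx0, ?_⟩
  rw [mink_smul_self, hxx]
  field_simp

lemma exists_sqrt_add_sqrt_eq_two {α β : ℝ} (hα : 0 ≤ α) (hβ : 0 ≤ β) (h : α + β < 2) :
    ∃ u > 0, √(u ^ 2 + α ^ 2) + √(u ^ 2 + β ^ 2) = 2 := by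
  -- The square roots will be `c` and `2 - c`, and `u ^ 2 = c ^ 2 - α ^ 2 = (2 - c) ^ 2 - β ^ 2`.
  set c := 1 + (α ^ 2 - β ^ 2) / 4 with hc_def
  have hpos : 0 < c ^ 2 - α ^ 2 := by
    have h1 : 0 < 4 - (α + β) ^ 2 := by nlinarith
    have h2 : 0 < 4 - (α - β) ^ 2 := by nlinarith
    have hfactor : c ^ 2 - α ^ 2 = (4 - (α + β) ^ 2) * (4 - (α - β) ^ 2) / 16 := by
      rw [hc_def]; ring
    rw [hfactor]
    exact div_pos (mul_pos h1 h2) (by norm_num)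
  refine ⟨√(c ^ 2 - α ^ 2), Real.sqrt_pos.2 hpos, ?_⟩
  rw [Real.sq_sqrt hpos.le]
  have hc : 0 ≤ c := by nlinarith
  have hc' : 0 ≤ 2 - c := by nlinarith
  rw [show c ^ 2 - α ^ 2 + α ^ 2 = c ^ 2 by ring, show c ^ 2 - α ^ 2 + β ^ 2 = (2 - c) ^ 2 by ring,
    Real.sqrt_sq hc, Real.sqrt_sq hc']
  ring

lemma enorm3_pog_add_lt_two {x y : Fin 4 → ℝ} (hx : x ∈ Hyp) (hy : y ∈ Hyp) :
    enorm3 (pog x y).1 + enorm3 (pog x y).2 < 2 := by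
  have hs : 0 < x 0 + y 0 := add_pos hx.1 hy.1
  simp only [pog, enorm3_smul, abs_of_pos (div_pos two_pos hs), ← mul_add]
  calc 2 / (x 0 + y 0) * (enorm3 (spat x) + enorm3 (spat y))
      < 2 / (x 0 + y 0) * (x 0 + y 0) := by
        gcongr
        exacts [enorm3_spat_lt_of_mem_Hyp hx, enorm3_spat_lt_of_mem_Hyp hy]
    _ = 2 := div_mul_cancel₀ _ hs.ne'

lemma exists_pog_eq {a b : Fin 3 → ℝ} (h : enorm3 a + enorm3 b < 2) :
    ∃ x ∈ Hyp, ∃ y ∈ Hyp, pog x y = (a, b) := by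
  obtain ⟨u, hu, hsum⟩ := exists_sqrt_add_sqrt_eq_two (enorm3_nonneg a) (enorm3_nonneg b) h
  have hmass (v : Fin 3 → ℝ) : mink (Fin.cons (√(u ^ 2 + enorm3 v ^ 2)) v)
      (Fin.cons (√(u ^ 2 + enorm3 v ^ 2)) v) = -u ^ 2 := by
    rw [mink_cons_self, Real.sq_sqrt (by positivity)]
    ring
  have htime (v : Fin 3 → ℝ) : 0 < (Fin.cons (√(u ^ 2 + enorm3 v ^ 2)) v : Fin 4 → ℝ) 0 :=
    Real.sqrt_pos.2 (by positivity)
  refine ⟨_, inv_smul_mem_Hyp hu (htime a) (hmass a),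
    _, inv_smul_mem_Hyp hu (htime b) (hmass b), ?_⟩
  rw [pog_smul (inv_ne_zero hu.ne'), pog_cons, hsum, div_self two_ne_zero, one_smul, one_smul]

/-- The image of the Pogorelov map is {(a,b) ∈ ℝ³ × ℝ³ | ‖a‖ + ‖b‖ < 2}. -/
theorem pogorelov_image :
    (fun p : (Fin 4 → ℝ) × (Fin 4 → ℝ) => pog p.1 p.2) '' (Hyp ×ˢ Hyp)
      = {p : (Fin 3 → ℝ) × (Fin 3 → ℝ) | enorm3 p.1 + enorm3 p.2 < 2} := by
  refine Set.Subset.antisymm ?_ fun ⟨a, b⟩ h => ?_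
  · rintro _ ⟨⟨x, y⟩, ⟨hx, hy⟩, rfl⟩
    exact enorm3_pog_add_lt_two hx hy
  · obtain ⟨x, hx, y, hy, hxy⟩ := exists_pog_eq h
    exact ⟨(x, y), ⟨hx, hy⟩, hxy⟩
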